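/- Let n ≥ 2 and let κ = (κ_1,…,κ_n) ∈ K_2 be ordered decreasingly, κ_1 ≥ κ_2 ≥ ⋯ ≥ κ_n. Then for every index i with 2 ≤ i ≤ n, (1 − 1/√2)·S_1(κ) ≤ S_1(κ) − κ_i ≤ 2·((n−1)/n)·S_1(κ). -/

import Mathlib

open Finset

/-- The `k`-th elementary symmetric polynomial of `x ∈ ℝ^m`. -/
noncomputable def esymm {m : ℕ} (k : ℕ) (x : Fin m → ℝ) : ℝ :=
  ∑ t ∈ Finset.powersetCard k (Finset.univ : Finset (Fin m)), ∏ i ∈ t, x i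

lemma esymm_one_eq {m : ℕ} (x : Fin m → ℝ) : esymm 1 x = ∑ i, x i := by
  simp [esymm, Finset.powersetCard_one]

lemma esymm_two_pairs {m : ℕ} (x : Fin m → ℝ) :
    esymm 2 x = ∑ p ∈ (Finset.univ ×ˢ Finset.univ : Finset (Fin m × Fin m)).filter
      (fun p => p.1 < p.2), x p.1 * x p.2 := by
  classical
  rw [esymm]
  refine (Finset.sum_bij (fun p _ => ({p.1, p.2} : Finset (Fin m))) ?_ ?_ ?_ ?_).symm
  · intro p hp
    simp only [mem_filter, mem_product] at hp
    rw [Finset.mem_powersetCard]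
    exact ⟨Finset.subset_univ _, Finset.card_pair hp.2.ne⟩
  · intro p hp' q hq' h
    simp only [mem_filter, mem_product] at hp' hq'
    have h' : ({p.1, p.2} : Finset (Fin m)) = {q.1, q.2} := h
    have h1 : p.1 = q.1 ∨ p.1 = q.2 := by
      have : p.1 ∈ ({q.1, q.2} : Finset (Fin m)) := h' ▸ (by simp)
      simpa using this
    have h2 : p.2 = q.1 ∨ p.2 = q.2 := by
      have : p.2 ∈ ({q.1, q.2} : Finset (Fin m)) := h' ▸ (by simp)
      simpa using this
    have hpq : (p.1 : ℕ) < p.2 := hp'.2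
    have hqq : (q.1 : ℕ) < q.2 := hq'.2
    have h1' : (p.1 : ℕ) = q.1 ∨ (p.1 : ℕ) = q.2 := by
      rcases h1 with h | h
      · exact Or.inl (by rw [h])
      · exact Or.inr (by rw [h])
    have h2' : (p.2 : ℕ) = q.1 ∨ (p.2 : ℕ) = q.2 := by
      rcases h2 with h | h
      · exact Or.inl (by rw [h])
      · exact Or.inr (by rw [h])
    have hc : (p.1 : ℕ) = q.1 ∧ (p.2 : ℕ) = q.2 := by omega
    exact Prod.ext (Fin.ext hc.1) (Fin.ext hc.2)
  · intro t ht
    rw [Finset.mem_powersetCard] at ht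
    obtain ⟨a, b, hab, rfl⟩ := Finset.card_eq_two.mp ht.2
    rcases lt_or_gt_of_ne hab with h | h
    · exact ⟨(a, b), by simp [h], rfl⟩
    · exact ⟨(b, a), by simp [h], by rw [Finset.pair_comm]⟩
  · intro p hp
    simp only [mem_filter, mem_product] at hp
    exact (Finset.prod_pair hp.2.ne).symm

lemma sq_sum_eq {m : ℕ} (x : Fin m → ℝ) :
    (∑ j, x j) ^ 2 = (∑ j, x j ^ 2) + 2 * esymm 2 x := by
  classical
  rw [esymm_two_pairs]
  have h0 : (∑ j, x j) ^ 2 = ∑ p ∈ (univ ×ˢ univ : Finset (Fin m × Fin m)), x p.1 * x p.2 := by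
    rw [Finset.sum_product, sq, Finset.sum_mul_sum]
  have hdiag : ∑ p ∈ (univ : Finset (Fin m)).diag, x p.1 * x p.2 = ∑ j, x j ^ 2 := by
    refine Finset.sum_bij (fun p _ => p.1) ?_ ?_ ?_ ?_
    · intro p hp; exact mem_univ _
    · intro p hp q hq h
      simp only [Finset.mem_diag] at hp hq
      exact Prod.ext h (by rw [← hp.2, ← hq.2]; exact h)
    · intro a _; exact ⟨(a, a), by simp [Finset.mem_diag], rfl⟩
    · intro p hp
      simp only [Finset.mem_diag] at hp
      rw [← hp.2, sq]
  have hswap : ∑ p ∈ (univ ×ˢ univ : Finset (Fin m × Fin m)).filter (fun p => p.2 < p.1),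
      x p.1 * x p.2 = ∑ p ∈ (univ ×ˢ univ : Finset (Fin m × Fin m)).filter
      (fun p => p.1 < p.2), x p.1 * x p.2 := by
    refine Finset.sum_nbij' (fun p => (p.2, p.1)) (fun p => (p.2, p.1)) ?_ ?_ ?_ ?_ ?_
    · intro p hp; simp only [mem_filter, mem_product] at *; exact ⟨⟨mem_univ _, mem_univ _⟩, hp.2⟩
    · intro p hp; simp only [mem_filter, mem_product] at *; exact ⟨⟨mem_univ _, mem_univ _⟩, hp.2⟩
    · intro p _; rfl
    · intro p _; rfl
    · intro p _; exact mul_comm _ _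
  have hoff : (univ : Finset (Fin m)).offDiag =
      (univ ×ˢ univ : Finset (Fin m × Fin m)).filter (fun p => p.1 < p.2) ∪
      (univ ×ˢ univ : Finset (Fin m × Fin m)).filter (fun p => p.2 < p.1) := by
    ext p
    simp only [Finset.mem_offDiag, mem_union, mem_filter, mem_product, mem_univ, true_and]
    constructor
    · intro h; exact lt_or_gt_of_ne h
    · rintro (h | h)
      · exact ne_of_lt h
      · exact (ne_of_lt h).symm
  have hdisj : Disjoint
      ((univ ×ˢ univ : Finset (Fin m × Fin m)).filter (fun p => p.1 < p.2))
      ((univ ×ˢ univ : Finset (Fin m × Fin m)).filter (fun p => p.2 < p.1)) := by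
    rw [Finset.disjoint_left]
    intro p hp hq
    simp only [mem_filter] at hp hq
    exact lt_asymm hp.2 hq.2
  rw [h0]
  conv_lhs => rw [← Finset.diag_union_offDiag (univ : Finset (Fin m)),
    Finset.sum_union (Finset.disjoint_diag_offDiag _), hdiag, hoff,
    Finset.sum_union hdisj, hswap]
  ring

theorem stmt_3 (n : ℕ) (hn : 2 ≤ n) (κ : Fin n → ℝ)
    (hord : ∀ i j : Fin n, i ≤ j → κ j ≤ κ i)
    (h1 : 0 < esymm 1 κ) (h2 : 0 < esymm 2 κ)
    (i : Fin n) (hi : 1 ≤ (i : ℕ)) :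
    (1 - 1 / Real.sqrt 2) * esymm 1 κ ≤ esymm 1 κ - κ i ∧
    esymm 1 κ - κ i ≤ 2 * (((n : ℝ) - 1) / n) * esymm 1 κ := by
  have hT : 0 < ∑ j, κ j := by rwa [esymm_one_eq] at h1
  set T : ℝ := ∑ j, κ j with hTdef
  set Q : ℝ := ∑ j, κ j ^ 2 with hQdef
  have hQT : Q < T ^ 2 := by
    have := sq_sum_eq κ
    rw [← hTdef, ← hQdef] at this
    nlinarith [h2]
  have hn' : (2 : ℝ) ≤ (n : ℝ) := by exact_mod_cast hn
  rw [esymm_one_eq]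
  constructor
  · -- lower bound: need κ i ≤ T / √2
    have hs2 : (0 : ℝ) < Real.sqrt 2 := Real.sqrt_pos.mpr (by norm_num)
    have hki : κ i ≤ T / Real.sqrt 2 := by
      rcases le_or_gt (κ i) 0 with h | h
      · exact h.trans (by positivity)
      · -- κ 0 ≥ κ i, both positive, 2 κ i ^2 ≤ Q < T^2
        have hznn : 0 < n := by omega
        set z : Fin n := ⟨0, hznn⟩ with hz
        have h0i : z ≤ i := Fin.le_def.mpr (Nat.zero_le _)
        have hk0 : κ i ≤ κ z := hord z i h0i
        have hne : z ≠ i := by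
          intro h'
          rw [← h'] at hi
          simp [hz] at hi
        have hsub : κ z ^ 2 + κ i ^ 2 ≤ Q := by
          have : ∑ j ∈ ({z, i} : Finset (Fin n)), κ j ^ 2 ≤ Q := by
            apply Finset.sum_le_sum_of_subset_of_nonneg (Finset.subset_univ _)
            intro j _ _; positivity
          rwa [Finset.sum_pair hne] at this
        have hlt : κ i ^ 2 < (T / Real.sqrt 2) ^ 2 := by
          rw [div_pow, Real.sq_sqrt (by norm_num : (0:ℝ) ≤ 2)]
          nlinarith
        exact le_of_lt (lt_of_pow_lt_pow_left₀ 2 (by positivity) hlt)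
    have e1 : T / Real.sqrt 2 = T * (1 / Real.sqrt 2) := by ring
    nlinarith [hki, hT]
  · -- upper bound
    have hn0 : (0 : ℝ) < (n : ℝ) := by linarith
    have hgoal : 2 * (((n : ℝ) - 1) / n) * T = (2 * ((n : ℝ) - 1) * T) / n := by ring
    rw [hgoal, le_div_iff₀ hn0]
    rcases le_or_gt 0 (κ i) with h | h
    · nlinarith [mul_nonneg hn0.le h, mul_nonneg (by linarith : (0:ℝ) ≤ (n:ℝ)-2) hT.le]
    · -- κ i < 0
      have hs : 0 < T - κ i := by linarith
      -- Cauchy-Schwarz on univ.erase i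
      have hcs : (T - κ i) ^ 2 ≤ ((n : ℝ) - 1) * (Q - κ i ^ 2) := by
        have hsum : ∑ j ∈ Finset.univ.erase i, κ j = T - κ i := by
          rw [Finset.sum_erase_eq_sub (Finset.mem_univ i)]
        have hsq : ∑ j ∈ Finset.univ.erase i, κ j ^ 2 = Q - κ i ^ 2 := by
          rw [Finset.sum_erase_eq_sub (Finset.mem_univ i)]
        have hcard : ((Finset.univ.erase i).card : ℝ) = (n : ℝ) - 1 := by
          rw [Finset.card_erase_of_mem (Finset.mem_univ i)]
          simp only [Finset.card_univ, Fintype.card_fin]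
          rw [Nat.cast_sub (by omega)]
          norm_num
        have := sq_sum_le_card_mul_sum_sq (s := Finset.univ.erase i) (f := κ)
        rw [hsum, hsq, hcard] at this
        exact this
      have key : 0 < ((n : ℝ) - 1) * (T ^ 2 - κ i ^ 2) - (T - κ i) ^ 2 := by
        nlinarith [hQT, hcs]
      have hfact : ((n : ℝ) - 1) * (T ^ 2 - κ i ^ 2) - (T - κ i) ^ 2 =
          (T - κ i) * (((n : ℝ) - 2) * T + (n : ℝ) * κ i) := by ring
      have hX : 0 < ((n : ℝ) - 2) * T + (n : ℝ) * κ i := by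
        by_contra hX
        push_neg at hX
        nlinarith [key, hfact, mul_nonpos_of_nonneg_of_nonpos hs.le hX]
      nlinarith [hX]
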